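/- arXiv:2305.00232 — 6 statements merged into one kernel-verified Lean document; each statement's English description precedes it below -/
import Mathlib

section
/- Let X be a Banach space and let G : X → X be a bounded linear operator of positive type with constant κ > 0. Then for every u ∈ X one has the interpolation inequality ‖Gu‖ ≤ 2(κ+1) ‖G²u‖^{1/2} ‖u‖^{1/2}. -/
/-!
With `B = (G + β)⁻¹` one has `G = B G² + β B G` and `B G = 1 - β B`, hence
`‖G u‖ ≤ (κ + 1) (‖G² u‖ / β + β ‖u‖)` for every `β > 0`. Minimising over `β`, i.e. taking
`β = (‖G² u‖ / ‖u‖)^{1/2}` up to a perturbation, gives `‖G u‖ ≤ 2 (κ + 1) ‖G² u‖^{1/2} ‖u‖^{1/2}`.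
-/

open ContinuousLinearMap

/-- A bounded linear operator `G : X → X` is of positive type with constant `κ > 0`
if for every `β > 0` the operator `G + β•I` is bijective with a bounded inverse
of operator norm at most `κ/β`. -/
def IsPositiveType {X : Type*} [NormedAddCommGroup X] [NormedSpace ℝ X]
    (G : X →L[ℝ] X) (κ : ℝ) : Prop :=
  ∀ β : ℝ, 0 < β → ∃ B : X →L[ℝ] X,
    B * (G + β • (1 : X →L[ℝ] X)) = 1 ∧ (G + β • (1 : X →L[ℝ] X)) * B = 1 ∧ ‖B‖ ≤ κ / β

open Filter Topology

theorem le_two_mul_sqrt_mul_sqrt_of_forall_le {x C a b : ℝ} (hC : 0 ≤ C) (ha : 0 ≤ a) (hb : 0 ≤ b)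
    (h : ∀ β > 0, x ≤ C * (a / β + β * b)) : x ≤ 2 * C * (√a * √b) := by
  obtain ⟨s, hs, rfl⟩ : ∃ s, 0 ≤ s ∧ s * s = a := ⟨√a, Real.sqrt_nonneg a, Real.mul_self_sqrt ha⟩
  obtain ⟨t, ht, rfl⟩ : ∃ t, 0 ≤ t ∧ t * t = b := ⟨√b, Real.sqrt_nonneg b, Real.mul_self_sqrt hb⟩
  rw [Real.sqrt_mul_self hs, Real.sqrt_mul_self ht]
  have hbound : ∀ ε > 0, x ≤ 2 * C * (s * t) + C * ε * (s + t) := by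
    intro ε hε
    -- `β = (s + ε) / (t + ε)` rather than `s / t`, which is useless when `s` or `t` vanishes.
    have hbal : s * s / ((s + ε) / (t + ε)) + (s + ε) / (t + ε) * (t * t)
        ≤ 2 * (s * t) + ε * (s + t) := by
      rw [div_div_eq_mul_div, div_mul_eq_mul_div, div_add_div _ _ (by positivity) (by positivity),
        div_le_iff₀ (by positivity)]
      nlinarith [mul_nonneg (mul_nonneg hs hε.le) (sq_nonneg (t + ε)),
        mul_nonneg (mul_nonneg ht hε.le) (sq_nonneg (s + ε))]
    calc x ≤ C * (s * s / ((s + ε) / (t + ε)) + (s + ε) / (t + ε) * (t * t)) := h _ (by positivity)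
      _ ≤ C * (2 * (s * t) + ε * (s + t)) := by gcongr
      _ = 2 * C * (s * t) + C * ε * (s + t) := by ring
  have hlim : Tendsto (fun ε ↦ 2 * C * (s * t) + C * ε * (s + t)) (𝓝[>] 0) (𝓝 (2 * C * (s * t))) :=
    tendsto_nhdsWithin_of_tendsto_nhds <| (by fun_prop : Continuous _).tendsto' _ _ (by simp)
  exact ge_of_tendsto hlim (eventually_nhdsWithin_of_forall hbound)

section Operator

variable {X : Type*} [NormedAddCommGroup X] [NormedSpace ℝ X]

theorem norm_apply_le_of_mul_add_smul_eq_one {G B : X →L[ℝ] X} {β C : ℝ} (hβ : 0 < β)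
    (hB : B * (G + β • 1) = 1) (hBn : ‖B‖ ≤ C / β) (u : X) :
    ‖G u‖ ≤ C / β * ‖G (G u)‖ + β * (C + 1) * ‖u‖ := by
  have hBG : B * G = 1 - β • B := by
    rw [eq_sub_iff_add_eq, ← hB, mul_add, mul_smul_comm, mul_one]
  have hGu : G u = B (G (G u)) + β • (u - β • B u) := by
    have hG : G = B * (G * G) + β • (B * G) := calc
      G = B * (G + β • 1) * G := by rw [hB, one_mul]
      _ = B * (G * G) + β • (B * G) := by
        rw [mul_assoc, add_mul, mul_add, smul_mul_assoc, one_mul, mul_smul_comm]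
    have := congr($hG u)
    rwa [hBG] at this
  have hsub : ‖u - β • B u‖ ≤ ‖u‖ + β * ‖B u‖ := by
    simpa only [norm_smul, Real.norm_of_nonneg hβ.le] using norm_sub_le u (β • B u)
  calc ‖G u‖ = ‖B (G (G u)) + β • (u - β • B u)‖ := by rw [← hGu]
    _ ≤ ‖B (G (G u))‖ + β * ‖u - β • B u‖ := by
        simpa only [norm_smul, Real.norm_of_nonneg hβ.le] using
          norm_add_le (B (G (G u))) (β • (u - β • B u))
    _ ≤ C / β * ‖G (G u)‖ + β * (‖u‖ + β * (C / β * ‖u‖)) := by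
        gcongr
        · exact B.le_of_opNorm_le hBn _
        · exact hsub.trans (by gcongr; exact B.le_of_opNorm_le hBn u)
    _ = C / β * ‖G (G u)‖ + β * (C + 1) * ‖u‖ := by field_simp; ring

theorem IsPositiveType.norm_apply_le {G : X →L[ℝ] X} {κ : ℝ} (hG : IsPositiveType G κ) {β : ℝ}
    (hβ : 0 < β) (u : X) : ‖G u‖ ≤ (κ + 1) * (‖G (G u)‖ / β + β * ‖u‖) := by
  obtain ⟨B, hB, -, hBn⟩ := hG β hβ
  have : 0 ≤ ‖G (G u)‖ / β := by positivity
  calc ‖G u‖ ≤ κ / β * ‖G (G u)‖ + β * (κ + 1) * ‖u‖ :=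
        norm_apply_le_of_mul_add_smul_eq_one hβ hB hBn u
    _ ≤ (κ + 1) * (‖G (G u)‖ / β + β * ‖u‖) := by
        rw [div_mul_eq_mul_div, mul_div_assoc]
        linarith

end Operator

theorem interpolation_inequality_of_positiveType_general
    {X : Type*} [NormedAddCommGroup X] [NormedSpace ℝ X]
    (G : X →L[ℝ] X) (κ : ℝ) (hκ : 0 < κ) (hG : IsPositiveType G κ) (u : X) :
    ‖G u‖ ≤ 2 * (κ + 1) * ‖G (G u)‖ ^ ((1 : ℝ) / 2) * ‖u‖ ^ ((1 : ℝ) / 2) := by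
  rw [← Real.sqrt_eq_rpow, ← Real.sqrt_eq_rpow, mul_assoc]
  exact le_two_mul_sqrt_mul_sqrt_of_forall_le (by linarith) (norm_nonneg _) (norm_nonneg _)
    fun β hβ ↦ hG.norm_apply_le hβ u

/-- Interpolation inequality (case `p = 1`, `q = 2`): for a positive type operator `G`
with constant `κ`, one has `‖Gu‖ ≤ 2(κ+1) ‖G²u‖^{1/2} ‖u‖^{1/2}` for all `u`. -/
theorem interpolation_inequality_of_positiveType
    {X : Type*} [NormedAddCommGroup X] [NormedSpace ℝ X] [CompleteSpace X]
    (G : X →L[ℝ] X) (κ : ℝ) (hκ : 0 < κ) (hG : IsPositiveType G κ) (u : X) :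
    ‖G u‖ ≤ 2 * (κ + 1) * ‖G (G u)‖ ^ ((1 : ℝ) / 2) * ‖u‖ ^ ((1 : ℝ) / 2) :=
  interpolation_inequality_of_positiveType_general G κ hκ hG u
end

section
/- Let X be a Banach space and let G : X → X be a bounded linear operator of positive type with constant κ > 0. For every integer m ≥ 1 and every integer p with 0 ≤ p ≤ m, the m-fold Lavrentiev companion operator S_β = β^m (G + βI)^{-m} satisfies ‖S_β G^p‖ ≤ (κ+1)^m β^p for all β > 0. -/
/-!
Write `B = (G + βI)⁻¹`. Being a two-sided inverse of `G + βI`, `B` commutes with `G`, and the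
resolvent identity `BG = I - βB` gives `‖BG‖ ≤ 1 + ‖βB‖ ≤ κ + 1`. Hence
`β^m B^m G^p = β^p (βB)^(m-p) (BG)^p`, and each of the `m` factors has norm at most `κ + 1`.
-/

theorem ContinuousLinearMap.opNorm_pow_le {𝕜 E : Type*} [NontriviallyNormedField 𝕜]
    [SeminormedAddCommGroup E] [NormedSpace 𝕜 E] (A : E →L[𝕜] E) (n : ℕ) :
    ‖A ^ n‖ ≤ ‖A‖ ^ n := by
  rcases n.eq_zero_or_pos with rfl | hn
  · rw [pow_zero, pow_zero]
    exact norm_id_le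
  · exact norm_pow_le' A hn

section Resolvent

variable {R : Type*} [Ring R] [Algebra ℝ R] {B G : R} {β : ℝ}

theorem commute_of_mul_add_smul_one (h₁ : B * (G + β • 1) = 1) (h₂ : (G + β • 1) * B = 1) :
    Commute B G := by
  have hBA : Commute B (G + β • 1) := h₁.trans h₂.symm
  simpa using hBA.sub_right ((Commute.one_right B).smul_right β)

theorem mul_eq_one_sub_smul_of_mul_add_smul_one (h : B * (G + β • 1) = 1) :
    B * G = 1 - β • B := by
  rw [← h, mul_add, mul_smul_comm, mul_one, add_sub_cancel_right]

theorem Commute.smul_pow_mul_pow_eq (hBG : Commute B G) (β : ℝ) {m p : ℕ} (hp : p ≤ m) :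
    (β ^ m • B ^ m) * G ^ p = β ^ p • ((β • B) ^ (m - p) * (B * G) ^ p) := by
  conv_lhs => rw [← Nat.sub_add_cancel hp]
  rw [hBG.mul_pow, smul_pow, smul_mul_assoc, smul_mul_assoc, smul_smul, pow_add, pow_add,
    mul_assoc, mul_comm (β ^ p)]

end Resolvent

theorem norm_mul_le_add_one_of_mul_add_smul_one {X : Type*} [NormedAddCommGroup X]
    [NormedSpace ℝ X] {B G : X →L[ℝ] X} {β κ : ℝ} (h : B * (G + β • 1) = 1)
    (hβB : ‖β • B‖ ≤ κ) : ‖B * G‖ ≤ κ + 1 := by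
  rw [mul_eq_one_sub_smul_of_mul_add_smul_one h]
  calc ‖1 - β • B‖ ≤ ‖(1 : X →L[ℝ] X)‖ + ‖β • B‖ := norm_sub_le _ _
    _ ≤ 1 + κ := add_le_add ContinuousLinearMap.norm_id_le hβB
    _ = κ + 1 := add_comm _ _

theorem lavrentiev_companion_estimate_general
    {X : Type*} [NormedAddCommGroup X] [NormedSpace ℝ X]
    (G : X →L[ℝ] X) (κ : ℝ) (B : ℝ → X →L[ℝ] X)
    (hB : ∀ β : ℝ, 0 < β →
      B β * (G + β • (1 : X →L[ℝ] X)) = 1 ∧ (G + β • (1 : X →L[ℝ] X)) * B β = 1 ∧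
      ‖B β‖ ≤ κ / β)
    (m : ℕ) (p : ℕ) (hp : p ≤ m) (β : ℝ) (hβ : 0 < β) :
    ‖(β ^ m • (B β) ^ m) * G ^ p‖ ≤ (κ + 1) ^ m * β ^ p := by
  obtain ⟨h₁, h₂, hBβ⟩ := hB β hβ
  have hβB : ‖β • B β‖ ≤ κ := by
    rw [norm_smul, Real.norm_of_nonneg hβ.le]
    exact (le_div_iff₀' hβ).mp hBβ
  have hBG : ‖B β * G‖ ≤ κ + 1 := norm_mul_le_add_one_of_mul_add_smul_one h₁ hβB
  rw [(commute_of_mul_add_smul_one h₁ h₂).smul_pow_mul_pow_eq β hp, norm_smul,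
    Real.norm_of_nonneg (pow_nonneg hβ.le p), mul_comm]
  gcongr
  calc ‖(β • B β) ^ (m - p) * (B β * G) ^ p‖
      ≤ ‖β • B β‖ ^ (m - p) * ‖B β * G‖ ^ p :=
        norm_mul_le_of_le (ContinuousLinearMap.opNorm_pow_le _ _)
          (ContinuousLinearMap.opNorm_pow_le _ _)
    _ ≤ (κ + 1) ^ (m - p) * (κ + 1) ^ p := by
        have : 0 ≤ κ + 1 := (norm_nonneg _).trans hBG
        gcongr
        linarith
    _ = (κ + 1) ^ m := by rw [← pow_add, Nat.sub_add_cancel hp]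

/-- For a positive type operator `G` with constant `κ` (with `B β` denoting the inverse of
`G + βI`), the `m`-fold Lavrentiev companion operator `S_β = β^m (G + βI)^{-m}` satisfies
`‖S_β G^p‖ ≤ (κ+1)^m β^p` for all integers `0 ≤ p ≤ m` and all `β > 0`. -/
theorem lavrentiev_companion_estimate
    {X : Type*} [NormedAddCommGroup X] [NormedSpace ℝ X] [CompleteSpace X]
    (G : X →L[ℝ] X) (κ : ℝ) (hκ : 0 < κ) (B : ℝ → X →L[ℝ] X)
    (hB : ∀ β : ℝ, 0 < β →
      B β * (G + β • (1 : X →L[ℝ] X)) = 1 ∧ (G + β • (1 : X →L[ℝ] X)) * B β = 1 ∧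
      ‖B β‖ ≤ κ / β)
    (m : ℕ) (hm : 1 ≤ m) (p : ℕ) (hp : p ≤ m) (β : ℝ) (hβ : 0 < β) :
    ‖(β ^ m • (B β) ^ m) * G ^ p‖ ≤ (κ + 1) ^ m * β ^ p :=
  lavrentiev_companion_estimate_general G κ B hB m p hp β hβ
end

section
/- Let Z be a separable Banach space, X = Z* its continuous dual with the dual norm, and let G̃ : Z → Z be a bounded linear operator whose dual map G = G̃* : X → X is injective. Let ū ∈ X, and let (u_n) be a sequence in X converging weakly-* to u ∈ X, i.e., u_n(z) → u(z) for every z ∈ Z. Suppose that for each n there is w_n ∈ X with u_n − ū = G w_n, and that L := liminf_n ‖w_n‖ < ∞. Then there exists w ∈ X with u − ū = G w and ‖w‖ ≤ L. (Equivalently, the penalty functional Ω(u) = ‖G^{-1}(u − ū)‖^r for u − ū ∈ R(G), Ω(u) = +∞ otherwise, is sequentially weak-* lower semicontinuous for any r > 0.) -/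
open Filter Topology

/-- Sequential weak-* lower semicontinuity of the penalty: let `Z` be a separable Banach
space, `X = Z*` its dual, and `G = G̃*` the dual map of a bounded operator `G̃ : Z → Z`,
assumed injective. If `uₙ ⇀* u` weakly-* in `X`, `uₙ - ū = G wₙ` for all `n`, and
`liminf ‖wₙ‖ < ∞`, then `u - ū = G w` for some `w` with `‖w‖ ≤ liminf ‖wₙ‖`. -/
theorem penalty_weakstar_lower_semicontinuous
    {Z : Type*} [NormedAddCommGroup Z] [NormedSpace ℝ Z] [CompleteSpace Z]
    [TopologicalSpace.SeparableSpace Z]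
    (G' : Z →L[ℝ] Z)
    (hinj : Function.Injective (fun φ : Z →L[ℝ] ℝ => φ.comp G'))
    (ubar u : Z →L[ℝ] ℝ) (un : ℕ → Z →L[ℝ] ℝ)
    (hconv : ∀ z : Z, Tendsto (fun n => un n z) atTop (𝓝 (u z)))
    (w : ℕ → Z →L[ℝ] ℝ) (hw : ∀ n, un n - ubar = (w n).comp G')
    (hL : liminf (fun n => ENNReal.ofReal ‖w n‖) atTop < ⊤) :
    ∃ w' : Z →L[ℝ] ℝ, u - ubar = w'.comp G' ∧
      ENNReal.ofReal ‖w'‖ ≤ liminf (fun n => ENNReal.ofReal ‖w n‖) atTop := by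
  set l := liminf (fun n => ENNReal.ofReal ‖w n‖) atTop with hl
  set L0 := l.toReal with hL0
  have hL0nonneg : 0 ≤ L0 := ENNReal.toReal_nonneg
  -- key estimate
  have key : ∀ z : Z, |(u - ubar) z| ≤ L0 * ‖G' z‖ := by
    intro z
    have habs : Tendsto (fun n => |(un n - ubar) z|) atTop (𝓝 (|(u - ubar) z|)) := by
      have h1 : Tendsto (fun n => un n z - ubar z) atTop (𝓝 (u z - ubar z)) :=
        (hconv z).sub tendsto_const_nhds
      have := h1.abs
      simpa [ContinuousLinearMap.sub_apply] using this
    refine le_of_forall_pos_le_add fun ε hε => ?_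
    set c := ‖G' z‖ with hc
    have hcnonneg : 0 ≤ c := norm_nonneg _
    set δ := ε / (c + 1) with hδ
    have hδpos : 0 < δ := div_pos hε (by linarith)
    -- frequently ‖w n‖ ≤ L0 + δ
    have hlt : l < ENNReal.ofReal (L0 + δ) := by
      have : ENNReal.ofReal (L0 + δ) = l + ENNReal.ofReal δ := by
        rw [ENNReal.ofReal_add hL0nonneg hδpos.le, hL0, ENNReal.ofReal_toReal hL.ne]
      rw [this]
      exact ENNReal.lt_add_right hL.ne (by simp [ENNReal.ofReal_pos, hδpos])
    have hfreq : ∃ᶠ n in atTop, ENNReal.ofReal ‖w n‖ < ENNReal.ofReal (L0 + δ) :=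
      frequently_lt_of_liminf_lt (by isBoundedDefault) hlt
    have hfreq2 : ∃ᶠ n in atTop, |(un n - ubar) z| ≤ (L0 + δ) * c := by
      refine hfreq.mono fun n hn => ?_
      have hwn : ‖w n‖ ≤ L0 + δ := by
        rw [← ENNReal.ofReal_le_ofReal_iff (by positivity)]
        exact hn.le
      have h1 : (un n - ubar) z = (w n) (G' z) := by rw [hw n]; rfl
      rw [h1]
      calc |(w n) (G' z)| = ‖(w n) (G' z)‖ := (Real.norm_eq_abs _).symm
        _ ≤ ‖w n‖ * ‖G' z‖ := (w n).le_opNorm _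
        _ ≤ (L0 + δ) * c := by
            exact mul_le_mul_of_nonneg_right hwn hcnonneg
    have hliminf : liminf (fun n => |(un n - ubar) z|) atTop = |(u - ubar) z| :=
      habs.liminf_eq
    have h2 : |(u - ubar) z| ≤ (L0 + δ) * c := by
      rw [← hliminf]
      exact liminf_le_of_frequently_le hfreq2 habs.isBoundedUnder_ge
    have h3 : δ * c ≤ ε := by
      rw [hδ]
      rw [div_mul_eq_mul_div, div_le_iff₀ (by linarith)]
      nlinarith
    nlinarith
  -- factor (u - ubar) through the range of G'
  set T := (G' : Z →ₗ[ℝ] Z) with hT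
  set f := ((u - ubar) : Z →ₗ[ℝ] ℝ) with hf
  have hker : LinearMap.ker T ≤ LinearMap.ker f := by
    intro z hz
    have hz' : G' z = 0 := hz
    have := key z
    rw [hz'] at this
    simp only [norm_zero, mul_zero] at this
    have : (u - ubar) z = 0 := abs_nonpos_iff.mp this
    simpa [hf] using this
  set fs : LinearMap.range T →ₗ[ℝ] ℝ :=
    ((LinearMap.ker T).liftQ f hker).comp T.quotKerEquivRange.symm.toLinearMap with hfs
  have hfs_apply : ∀ z : Z, fs ⟨T z, LinearMap.mem_range_self T z⟩ = (u - ubar) z := by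
    intro z
    simp only [hfs, LinearMap.comp_apply, LinearEquiv.coe_toLinearMap]
    rw [LinearMap.quotKerEquivRange_symm_apply_image]
    simp [Submodule.liftQ_apply, hf]
  -- Hahn-Banach extension dominated by N x = L0 * ‖x‖
  obtain ⟨g, hg_eq, hg_le⟩ :=
    exists_extension_of_le_sublinear ⟨LinearMap.range T, fs⟩ (fun x => L0 * ‖x‖)
      (fun c hc x => by
        simp only [norm_smul, Real.norm_eq_abs, abs_of_pos hc]; ring)
      (fun x y => by
        rw [← left_distrib]
        exact mul_le_mul_of_nonneg_left (norm_add_le x y) hL0nonneg)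
      (fun x => by
        obtain ⟨x, hx⟩ := x
        obtain ⟨z, rfl⟩ := hx
        show fs _ ≤ _
        calc fs ⟨T z, LinearMap.mem_range_self T z⟩ = (u - ubar) z := hfs_apply z
          _ ≤ |(u - ubar) z| := le_abs_self _
          _ ≤ L0 * ‖G' z‖ := key z
          _ = L0 * ‖T z‖ := rfl)
  have hg_bound : ∀ x, |g x| ≤ L0 * ‖x‖ := fun x =>
    abs_le.2 ⟨neg_le.1 <| by simpa [norm_neg] using hg_le (-x), hg_le x⟩
  set w' := g.mkContinuous L0 fun x => by
    rw [Real.norm_eq_abs]; exact hg_bound x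
  have hw'norm : ‖w'‖ ≤ L0 := g.mkContinuous_norm_le hL0nonneg _
  refine ⟨w', ?_, ?_⟩
  · ext z
    have h1 : w' (G' z) = g (T z) := rfl
    have h2 : g (T z) = fs ⟨T z, LinearMap.mem_range_self T z⟩ :=
      hg_eq ⟨T z, LinearMap.mem_range_self T z⟩
    have : (u - ubar) z = w' (G' z) := by rw [h1, h2, hfs_apply]
    simpa using this
  · calc ENNReal.ofReal ‖w'‖ ≤ ENNReal.ofReal L0 := ENNReal.ofReal_le_ofReal hw'norm
      _ = l := by rw [hL0, ENNReal.ofReal_toReal hL.ne]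
end

section
/- The Volterra integration operator G on L^∞(0,1) is of positive type with constant κ = 2: for every β > 0 the operator G + βI : L^∞(0,1) → L^∞(0,1) is bijective and its inverse satisfies the operator norm bound ‖(G + βI)^{-1}‖ ≤ 2/β. -/
/-!
Write `U = Gu`, so that `(G + βI)u = U + βU'` with `U(0) = 0`. With the integrating factor
`e^{s/β}` the product rule for absolutely continuous functions gives
`∫₀ˣ e^{s/β} (U + βU')(s) ds = β e^{x/β} U(x)`, hence
`|U(x)| ≤ (1 - e^{-x/β}) ‖(G + βI)u‖_∞ ≤ ‖(G + βI)u‖_∞`, and `β|u| ≤ |(G + βI)u| + |U|`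
gives the constant `2`. Conversely, for `f ∈ L^∞` the damped primitive
`V(x) = β⁻¹ ∫₀ˣ e^{(t-x)/β} f(t) dt` is absolutely continuous and solves `V + βV' = f`,
`V(0) = 0`, so `u = V' = (f - V)/β` is a preimage of `f`.
-/

open MeasureTheory Set Real
open scoped ENNReal

theorem hasDerivAt_mul_exp_div {β : ℝ} (hβ : β ≠ 0) (s : ℝ) :
    HasDerivAt (fun s => β * exp (s / β)) (exp (s / β)) s := by
  refine (((hasDerivAt_id s).div_const β).exp.const_mul β).congr_deriv ?_
  simp only [id]
  field_simp

theorem integral_exp_div {β : ℝ} (hβ : β ≠ 0) (a b : ℝ) :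
    ∫ s in a..b, exp (s / β) = β * exp (b / β) - β * exp (a / β) :=
  intervalIntegral.integral_eq_sub_of_hasDerivAt (fun s _ => hasDerivAt_mul_exp_div hβ s)
    ((by fun_prop : Continuous fun s => exp (s / β)).intervalIntegrable a b)

theorem ae_norm_le_toReal_eLpNorm_top {α E : Type*} [MeasurableSpace α] {μ : Measure α}
    [NormedAddCommGroup E] {f : α → E} (hf : eLpNorm f ⊤ μ ≠ ⊤) :
    ∀ᵐ x ∂μ, ‖f x‖ ≤ (eLpNorm f ⊤ μ).toReal := by
  filter_upwards [enorm_ae_le_eLpNormEssSup f μ] with x hx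
  rw [← toReal_enorm, eLpNorm_exponent_top]
  exact ENNReal.toReal_mono hf hx

theorem MeasureTheory.MemLp.intervalIntegrable_of_mem_Icc {p : ℝ≥0∞} (hp : 1 ≤ p) {a b x : ℝ}
    {u : ℝ → ℝ} (hu : MemLp u p (volume.restrict (Ioo a b))) (hx : x ∈ Icc a b) :
    IntervalIntegrable u volume a x := by
  have hIcc : IntegrableOn u (Icc a b) :=
    (integrableOn_Icc_iff_integrableOn_Ioo).2 (hu.integrable hp)
  exact (hIcc.mono_set (uIcc_subset_Icc (left_mem_Icc.2 (hx.1.trans hx.2)) hx)).intervalIntegrable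

theorem integral_exp_div_mul_primitive_add {β a b : ℝ} (hβ : β ≠ 0) {u : ℝ → ℝ}
    (hu : IntervalIntegrable u volume a b) :
    ∫ s in a..b, exp (s / β) * ((∫ t in a..s, u t) + β * u s)
      = β * exp (b / β) * ∫ t in a..b, u t := by
  have hE : AbsolutelyContinuousOnInterval (fun s => β * exp (s / β)) a b :=
    ContDiffOn.absolutelyContinuousOnInterval (by fun_prop)
  have hparts :=
    hE.integral_deriv_mul_eq_sub (hu.absolutelyContinuousOnInterval_intervalIntegral left_mem_uIcc)
  simp only [intervalIntegral.integral_same, mul_zero, sub_zero] at hparts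
  rw [← hparts]
  refine intervalIntegral.integral_congr_ae ?_
  filter_upwards [hu.ae_hasDerivAt_integral] with s hU hs
  rw [(hasDerivAt_mul_exp_div hβ s).deriv, (hU (uIoc_subset_uIcc hs) a left_mem_uIcc).deriv]
  ring

theorem abs_primitive_le_of_ae_abs_primitive_add_le {β a x N : ℝ} (hβ : 0 < β) (hax : a ≤ x)
    (hN : 0 ≤ N) {u : ℝ → ℝ} (hu : IntervalIntegrable u volume a x)
    (hF : ∀ᵐ t, t ∈ Ioc a x → |(∫ r in a..t, u r) + β * u t| ≤ N) :
    |∫ t in a..x, u t| ≤ N := by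
  have hexp : 0 < β * exp (x / β) := by positivity
  refine le_of_mul_le_mul_left ?_ hexp
  calc β * exp (x / β) * |∫ t in a..x, u t|
      = |∫ s in a..x, exp (s / β) * ((∫ t in a..s, u t) + β * u s)| := by
        rw [integral_exp_div_mul_primitive_add hβ.ne' hu, abs_mul, abs_of_pos hexp]
    _ ≤ ∫ s in a..x, exp (s / β) * N := by
        rw [← Real.norm_eq_abs]
        refine intervalIntegral.norm_integral_le_of_norm_le hax ?_
          ((by fun_prop : Continuous fun s => exp (s / β) * N).intervalIntegrable a x)
        filter_upwards [hF] with s hs hs'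
        rw [Real.norm_eq_abs, abs_mul, abs_of_pos (exp_pos _)]
        gcongr
        exact hs hs'
    _ = (β * exp (x / β) - β * exp (a / β)) * N := by
        rw [intervalIntegral.integral_mul_const, integral_exp_div hβ.ne']
    _ ≤ β * exp (x / β) * N := by
        gcongr
        linarith [mul_pos hβ (exp_pos (a / β))]

theorem eLpNorm_top_le_of_primitive_add {β a b : ℝ} (hβ : 0 < β) {u : ℝ → ℝ}
    (hu : MemLp u ⊤ (volume.restrict (Ioo a b))) :
    eLpNorm u ⊤ (volume.restrict (Ioo a b)) ≤
      ENNReal.ofReal (2 / β) *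
        eLpNorm (fun x => (∫ t in a..x, u t) + β * u x) ⊤ (volume.restrict (Ioo a b)) := by
  set F := fun x => (∫ t in a..x, u t) + β * u x
  by_cases hF : eLpNorm F ⊤ (volume.restrict (Ioo a b)) = ⊤
  · simp [hF, ENNReal.mul_top, hβ]
  set N := (eLpNorm F ⊤ (volume.restrict (Ioo a b))).toReal
  have hFN := ae_norm_le_toReal_eLpNorm_top hF
  have hU : ∀ x ∈ Ioo a b, |∫ t in a..x, u t| ≤ N := by
    intro x hx
    refine abs_primitive_le_of_ae_abs_primitive_add_le hβ hx.1.le ENNReal.toReal_nonneg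
      (hu.intervalIntegrable_of_mem_Icc le_top (Ioo_subset_Icc_self hx)) ?_
    filter_upwards [(ae_restrict_iff' measurableSet_Ioo).1 hFN] with t ht htx
    exact ht ⟨htx.1, htx.2.trans_lt hx.2⟩
  have hu_le : ∀ᵐ x ∂volume.restrict (Ioo a b), ‖u x‖ ≤ 2 / β * N := by
    filter_upwards [ae_restrict_mem measurableSet_Ioo, hFN] with x hx hFx
    rw [Real.norm_eq_abs, div_mul_eq_mul_div, le_div_iff₀ hβ]
    calc |u x| * β = |F x - ∫ t in a..x, u t| := by simp [F, abs_mul, abs_of_pos hβ, mul_comm]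
      _ ≤ |F x| + |∫ t in a..x, u t| := abs_sub _ _
      _ ≤ 2 * N := by linarith [hU x hx, (Real.norm_eq_abs (F x)) ▸ hFx]
  calc eLpNorm u ⊤ (volume.restrict (Ioo a b)) ≤ ENNReal.ofReal (2 / β * N) := by
        simpa using eLpNorm_le_of_ae_bound (p := ⊤) hu_le
    _ = _ := by rw [ENNReal.ofReal_mul (by positivity), ENNReal.ofReal_toReal hF]

noncomputable def dampedPrimitive (β a : ℝ) (f : ℝ → ℝ) (x : ℝ) : ℝ :=
  exp (-x / β) / β * ∫ t in a..x, exp (t / β) * f t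

theorem absolutelyContinuousOnInterval_dampedPrimitive {β a b : ℝ} {f : ℝ → ℝ}
    (hf : IntervalIntegrable f volume a b) :
    AbsolutelyContinuousOnInterval (dampedPrimitive β a f) a b :=
  (ContDiffOn.absolutelyContinuousOnInterval (by fun_prop)).fun_mul
    ((hf.continuousOn_mul (by fun_prop)).absolutelyContinuousOnInterval_intervalIntegral
      left_mem_uIcc)

theorem integral_inv_mul_sub_dampedPrimitive {β a b x : ℝ} {f : ℝ → ℝ}
    (hf : IntervalIntegrable f volume a b) (hx : x ∈ uIcc a b) :
    ∫ t in a..x, β⁻¹ * (f t - dampedPrimitive β a f t) = dampedPrimitive β a f x := by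
  have hg : IntervalIntegrable (fun t => exp (t / β) * f t) volume a b :=
    hf.continuousOn_mul (by fun_prop)
  have hderiv : ∀ᵐ t, t ∈ uIcc a b →
      HasDerivAt (dampedPrimitive β a f) (β⁻¹ * (f t - dampedPrimitive β a f t)) t := by
    filter_upwards [hg.ae_hasDerivAt_integral] with t hW ht
    have hc : HasDerivAt (fun s => exp (-s / β) / β) (-(exp (-t / β) / β) / β) t :=
      (((hasDerivAt_neg t).div_const β).exp.div_const β).congr_deriv (by ring)
    refine (hc.mul (hW ht a left_mem_uIcc)).congr_deriv ?_
    have hexp : exp (-t / β) * exp (t / β) = 1 := by rw [← exp_add]; simp [neg_div]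
    simp only [dampedPrimitive]
    linear_combination (f t / β) * hexp
  have hV := (absolutelyContinuousOnInterval_dampedPrimitive (β := β) hf).mono
    (uIcc_subset_uIcc left_mem_uIcc hx)
  calc ∫ t in a..x, β⁻¹ * (f t - dampedPrimitive β a f t)
      = ∫ t in a..x, deriv (dampedPrimitive β a f) t := by
        refine intervalIntegral.integral_congr_ae ?_
        filter_upwards [hderiv] with t ht htx
        exact (ht (uIcc_subset_uIcc left_mem_uIcc hx (uIoc_subset_uIcc htx))).deriv.symm
    _ = dampedPrimitive β a f x := by
        simp [hV.integral_deriv_eq_sub, dampedPrimitive]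

theorem exists_memLp_primitive_add_eq {β a b : ℝ} (hβ : β ≠ 0) (hab : a ≤ b)
    {f : ℝ → ℝ} (hf : MemLp f ⊤ (volume.restrict (Ioo a b))) :
    ∃ u : ℝ → ℝ, MemLp u ⊤ (volume.restrict (Ioo a b)) ∧
      (fun x => (∫ t in a..x, u t) + β * u x) =ᵐ[volume.restrict (Ioo a b)] f := by
  have hf' : IntervalIntegrable f volume a b :=
    hf.intervalIntegrable_of_mem_Icc le_top ⟨hab, le_rfl⟩
  have hIoo : Ioo a b ⊆ uIcc a b := Ioo_subset_Icc_self.trans Icc_subset_uIcc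
  set V := dampedPrimitive β a f
  have hV := absolutelyContinuousOnInterval_dampedPrimitive (β := β) hf'
  obtain ⟨C, hC⟩ := hV.exists_bound
  have hVmem : MemLp V ⊤ (volume.restrict (Ioo a b)) :=
    memLp_top_of_bound ((hV.continuousOn.mono hIoo).aestronglyMeasurable measurableSet_Ioo) C
      (ae_restrict_of_forall_mem measurableSet_Ioo fun x hx => hC x (hIoo hx))
  refine ⟨fun t => β⁻¹ * (f t - V t), (hf.sub hVmem).const_mul β⁻¹, ?_⟩
  filter_upwards [ae_restrict_mem measurableSet_Ioo] with x hx
  simp only [V, integral_inv_mul_sub_dampedPrimitive hf' (hIoo hx), mul_inv_cancel_left₀ hβ,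
    add_sub_cancel]

/-- The Volterra integration operator `(Gu)(x) = ∫_0^x u(ξ) dξ` on `L^∞(0,1)` is of positive
type with constant `κ = 2`: for every `β > 0`, the operator `G + βI` is bijective on
`L^∞(0,1)` (surjectivity is stated explicitly; injectivity follows from the norm bound)
and its inverse satisfies `‖(G + βI)^{-1}‖ ≤ 2/β`, i.e.
`‖u‖_∞ ≤ (2/β) ‖(G + βI)u‖_∞` for all `u ∈ L^∞(0,1)`. -/
theorem volterra_positiveType_constant_two (β : ℝ) (hβ : 0 < β) :
    (∀ f : ℝ → ℝ, MemLp f ⊤ (volume.restrict (Set.Ioo 0 1)) →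
      ∃ u : ℝ → ℝ, MemLp u ⊤ (volume.restrict (Set.Ioo 0 1)) ∧
        (fun x => (∫ t in (0:ℝ)..x, u t) + β * u x) =ᵐ[volume.restrict (Set.Ioo 0 1)] f) ∧
    (∀ u : ℝ → ℝ, MemLp u ⊤ (volume.restrict (Set.Ioo 0 1)) →
      eLpNorm u ⊤ (volume.restrict (Set.Ioo 0 1)) ≤
        ENNReal.ofReal (2 / β) *
          eLpNorm (fun x => (∫ t in (0:ℝ)..x, u t) + β * u x) ⊤
            (volume.restrict (Set.Ioo 0 1))) :=
  ⟨fun _ hf => exists_memLp_primitive_add_eq hβ.ne' zero_le_one hf,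
    fun _ hu => eLpNorm_top_le_of_primitive_add hβ hu⟩
end

section
/- Let F : L^∞(0,1) → L^∞(0,1) be the nonlinear operator [F(u)](x) = exp((Gu)(x)). If (u_n) is a bounded sequence in L^∞(0,1), u ∈ L^∞(0,1), and ∫_0^1 u_n v → ∫_0^1 u v for every v ∈ L¹(0,1) (i.e., u_n converges weakly-* to u in L^∞(0,1) = (L¹(0,1))*), then ‖F(u_n) − F(u)‖_∞ → 0 as n → ∞. In particular, F is weak-*-to-weak sequentially continuous. -/
/-!
Testing the weak-* convergence against the indicator of `(0, x)` gives pointwise convergence of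
the primitives `G uₙ → G u` on `[0, 1]`. The uniform `L^∞` bound `M` makes these primitives
`M`-Lipschitz, so the family is equicontinuous on a compact space and the convergence is uniform
(Arzelà–Ascoli). All primitives take values in the ball of radius `M`, on which `exp` is uniformly
continuous, so `exp ∘ G uₙ → exp ∘ G u` uniformly as well, and uniform convergence dominates the
`L^∞` norm.
-/

open MeasureTheory Filter Topology Set

lemma ae_norm_le_of_eLpNorm_top_le {α E : Type*} [MeasurableSpace α] [NormedAddCommGroup E]
    {μ : Measure α} {f : α → E} {C : ℝ} (hC : 0 ≤ C) (hf : eLpNorm f ⊤ μ ≤ ENNReal.ofReal C) :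
    ∀ᵐ x ∂μ, ‖f x‖ ≤ C := by
  filter_upwards [ae_le_eLpNormEssSup (f := f) (μ := μ)] with x hx
  rw [← eLpNorm_exponent_top, ← ofReal_norm] at hx
  exact (ENNReal.ofReal_le_ofReal_iff hC).1 (hx.trans hf)

lemma tendsto_eLpNorm_top_of_tendstoUniformlyOn {α ι E : Type*} [MeasurableSpace α]
    [NormedAddCommGroup E] {μ : Measure α} {l : Filter ι} {s : Set α} {F : ι → α → E}
    {f : α → E} (hs : MeasurableSet s) (h : TendstoUniformlyOn F f l s) :
    Tendsto (fun i => eLpNorm (fun x => F i x - f x) ⊤ (μ.restrict s)) l (𝓝 0) := by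
  rw [ENNReal.tendsto_nhds_zero]
  intro ε hε
  obtain ⟨δ, -, hδ, hδε⟩ := ENNReal.lt_iff_exists_real_btwn.1 hε
  filter_upwards [Metric.tendstoUniformlyOn_iff.1 h δ (ENNReal.ofReal_pos.1 hδ)] with i hi
  refine (eLpNorm_le_of_ae_bound (C := δ) ?_).trans ?_
  · rw [ae_restrict_iff' hs]
    exact ae_of_all _ fun x hx => by simpa [dist_eq_norm'] using (hi x hx).le
  · simpa using hδε.le

lemma uIoc_subset_Ioc_of_mem_Icc {a b x y : ℝ} (hx : x ∈ Icc a b) (hy : y ∈ Icc a b) :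
    uIoc x y ⊆ Ioc a b := by
  intro t ht
  rw [mem_uIoc] at ht
  constructor <;> rcases ht with ht | ht <;> linarith [hx.1, hx.2, hy.1, hy.2, ht.1, ht.2]

section Primitive

variable {a b M : ℝ} {w : ℝ → ℝ}

lemma intervalIntegrable_of_integrableOn_Ioo (hw : IntegrableOn w (Ioo a b)) {x y : ℝ}
    (hx : x ∈ Icc a b) (hy : y ∈ Icc a b) : IntervalIntegrable w volume x y :=
  intervalIntegrable_iff.2 <|
    ((integrableOn_Ioc_iff_integrableOn_Ioo enorm_ne_top).2 hw).mono_set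
      (uIoc_subset_Ioc_of_mem_Icc hx hy)

lemma norm_intervalIntegral_le_of_ae_restrict_Ioo
    (hM : ∀ᵐ t ∂volume.restrict (Ioo a b), ‖w t‖ ≤ M) {x y : ℝ}
    (hx : x ∈ Icc a b) (hy : y ∈ Icc a b) : ‖∫ t in x..y, w t‖ ≤ M * |y - x| := by
  refine intervalIntegral.norm_integral_le_of_norm_le_const_ae ?_
  rw [Measure.restrict_congr_set Ioo_ae_eq_Ioc] at hM
  rw [← ae_restrict_iff' measurableSet_uIoc]
  exact ae_restrict_of_ae_restrict_of_subset (uIoc_subset_Ioc_of_mem_Icc hx hy) hM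

lemma lipschitzOnWith_intervalIntegral (hw : IntegrableOn w (Ioo a b))
    (hM : ∀ᵐ t ∂volume.restrict (Ioo a b), ‖w t‖ ≤ M) :
    LipschitzOnWith M.toNNReal (fun x => ∫ t in a..x, w t) (Icc a b) := by
  refine LipschitzOnWith.of_dist_le_mul fun x hx y hy => ?_
  have ha : a ∈ Icc a b := left_mem_Icc.2 (hx.1.trans hx.2)
  rw [dist_eq_norm, intervalIntegral.integral_interval_sub_left
    (intervalIntegrable_of_integrableOn_Ioo hw ha hx)
    (intervalIntegrable_of_integrableOn_Ioo hw ha hy), Real.dist_eq, Real.coe_toNNReal']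
  exact (norm_intervalIntegral_le_of_ae_restrict_Ioo hM hy hx).trans
    (mul_le_mul_of_nonneg_right (le_max_left _ _) (abs_nonneg _))

lemma norm_intervalIntegral_le_of_mem_Icc (hM₀ : 0 ≤ M)
    (hM : ∀ᵐ t ∂volume.restrict (Ioo a b), ‖w t‖ ≤ M) {x : ℝ} (hx : x ∈ Icc a b) :
    ‖∫ t in a..x, w t‖ ≤ M * (b - a) := by
  have ha : a ∈ Icc a b := left_mem_Icc.2 (hx.1.trans hx.2)
  refine (norm_intervalIntegral_le_of_ae_restrict_Ioo hM ha hx).trans ?_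
  rw [abs_of_nonneg (sub_nonneg.2 hx.1)]
  exact mul_le_mul_of_nonneg_left (by linarith [hx.2]) hM₀

lemma setIntegral_Ioo_mul_indicator_eq_intervalIntegral {x : ℝ} (hx : x ∈ Icc a b) :
    ∫ t in Ioo a b, w t * (Ioo a x).indicator 1 t = ∫ t in a..x, w t := by
  simp_rw [← indicator_mul_right, Pi.one_apply, mul_one]
  rw [integral_indicator measurableSet_Ioo, Measure.restrict_restrict measurableSet_Ioo,
    inter_eq_left.2 (Ioo_subset_Ioo_right hx.2), ← integral_Ioc_eq_integral_Ioo,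
    intervalIntegral.integral_of_le hx.1]

end Primitive

section WeakStar

variable {ι : Type*} {l : Filter ι} {a b M : ℝ} {u : ι → ℝ → ℝ} {u₀ : ℝ → ℝ}

lemma tendsto_intervalIntegral_of_weakStar
    (hconv : ∀ v : ℝ → ℝ, IntegrableOn v (Ioo a b) →
      Tendsto (fun i => ∫ x in Ioo a b, u i x * v x) l (𝓝 (∫ x in Ioo a b, u₀ x * v x)))
    {x : ℝ} (hx : x ∈ Icc a b) :
    Tendsto (fun i => ∫ t in a..x, u i t) l (𝓝 (∫ t in a..x, u₀ t)) := by
  have hv : IntegrableOn ((Ioo a x).indicator 1) (Ioo a b) :=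
    (integrableOn_const (C := (1:ℝ)) measure_Ioo_lt_top.ne).indicator measurableSet_Ioo
  simpa only [setIntegral_Ioo_mul_indicator_eq_intervalIntegral hx] using hconv _ hv

lemma tendstoUniformlyOn_intervalIntegral_of_weakStar (hu : ∀ i, IntegrableOn (u i) (Ioo a b))
    (hM : ∀ i, ∀ᵐ t ∂volume.restrict (Ioo a b), ‖u i t‖ ≤ M)
    (hconv : ∀ v : ℝ → ℝ, IntegrableOn v (Ioo a b) →
      Tendsto (fun i => ∫ x in Ioo a b, u i x * v x) l (𝓝 (∫ x in Ioo a b, u₀ x * v x))) :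
    TendstoUniformlyOn (fun i x => ∫ t in a..x, u i t) (fun x => ∫ t in a..x, u₀ t) l
      (Icc a b) := by
  have hequi : Equicontinuous fun i => (Icc a b).domRestrict fun x => ∫ t in a..x, u i t :=
    (LipschitzWith.uniformEquicontinuous _ M.toNNReal fun i => lipschitzOnWith_iff_restrict.1
      (lipschitzOnWith_intervalIntegral (hu i) (hM i))).equicontinuous
  rw [tendstoUniformlyOn_iff_restrict]
  exact UniformFun.tendsto_iff_tendstoUniformly.1 <| (hequi.tendsto_uniformFun_iff_pi l _).2 <|
    tendsto_pi_nhds.2 fun x => tendsto_intervalIntegral_of_weakStar hconv x.2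

end WeakStar

/-- The exponential forward operator `[F(u)](x) = exp((Gu)(x))`, with `G` the Volterra
integration operator, is weak-*-to-weak sequentially continuous on `L^∞(0,1)`; in fact, if
`(uₙ)` is bounded in `L^∞(0,1)` and converges weakly-* to `u`, then
`‖F(uₙ) − F(u)‖_∞ → 0`. -/
theorem exponential_forward_operator_weakstar_continuous
    (C : ℝ) (u : ℕ → ℝ → ℝ) (u₀ : ℝ → ℝ)
    (hmem : ∀ n, MemLp (u n) ⊤ (volume.restrict (Set.Ioo 0 1)))
    (hmem₀ : MemLp u₀ ⊤ (volume.restrict (Set.Ioo 0 1)))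
    (hbd : ∀ n, eLpNorm (u n) ⊤ (volume.restrict (Set.Ioo 0 1)) ≤ ENNReal.ofReal C)
    (hconv : ∀ v : ℝ → ℝ, IntegrableOn v (Set.Ioo (0:ℝ) 1) →
      Tendsto (fun n => ∫ x in Set.Ioo (0:ℝ) 1, u n x * v x) atTop
        (𝓝 (∫ x in Set.Ioo (0:ℝ) 1, u₀ x * v x))) :
    Tendsto
      (fun n => eLpNorm
        (fun x => Real.exp (∫ t in (0:ℝ)..x, u n t) - Real.exp (∫ t in (0:ℝ)..x, u₀ t)) ⊤
        (volume.restrict (Set.Ioo 0 1)))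
      atTop (𝓝 0) := by
  set M := max C (eLpNorm u₀ ⊤ (volume.restrict (Ioo (0:ℝ) 1))).toReal
  have hM₀ : 0 ≤ M := le_max_of_le_right ENNReal.toReal_nonneg
  have hbdM : ∀ n, ∀ᵐ t ∂volume.restrict (Ioo (0:ℝ) 1), ‖u n t‖ ≤ M := fun n =>
    ae_norm_le_of_eLpNorm_top_le hM₀ ((hbd n).trans (ENNReal.ofReal_le_ofReal (le_max_left _ _)))
  have hbdM₀ : ∀ᵐ t ∂volume.restrict (Ioo (0:ℝ) 1), ‖u₀ t‖ ≤ M := by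
    refine ae_norm_le_of_eLpNorm_top_le hM₀ ?_
    rw [← ENNReal.ofReal_toReal hmem₀.eLpNorm_ne_top]
    exact ENNReal.ofReal_le_ofReal (le_max_right _ _)
  have hG := tendstoUniformlyOn_intervalIntegral_of_weakStar
    (fun n => (hmem n).integrable le_top) hbdM hconv
  have hexp := (isCompact_closedBall (0:ℝ) M).uniformContinuousOn_of_continuous
    Real.continuous_exp.continuousOn |>.comp_tendstoUniformlyOn_eventually
      (Eventually.of_forall fun n x hx => mem_closedBall_zero_iff.2 <| by
        simpa using norm_intervalIntegral_le_of_mem_Icc hM₀ (hbdM n) hx)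
      (fun x hx => mem_closedBall_zero_iff.2 <| by
        simpa using norm_intervalIntegral_le_of_mem_Icc hM₀ hbdM₀ hx) hG
  exact tendsto_eLpNorm_top_of_tendstoUniformlyOn measurableSet_Ioo (hexp.mono Ioo_subset_Icc_self)
end

section
/- For all real numbers s and t one has |e^t − e^s − e^s (t − s)| ≤ |t − s| · |e^t − e^s|. -/
/-- Pointwise core of the nonlinearity estimate for the exponential forward operator:
for all real numbers `s` and `t`, `|e^t − e^s − e^s (t − s)| ≤ |t − s| · |e^t − e^s|`. -/
theorem exp_taylor_remainder_estimate (s t : ℝ) :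
    |Real.exp t - Real.exp s - Real.exp s * (t - s)| ≤ |t - s| * |Real.exp t - Real.exp s| := by
  have hes := Real.exp_pos s
  have het := Real.exp_pos t
  have h1 : Real.exp t = Real.exp s * Real.exp (t - s) := by
    rw [← Real.exp_add]; ring_nf
  have h2 : Real.exp s = Real.exp t * Real.exp (s - t) := by
    rw [← Real.exp_add]; ring_nf
  have hlow : Real.exp s + Real.exp s * (t - s) ≤ Real.exp t := by
    have h3 := Real.add_one_le_exp (t - s)
    nlinarith
  have hkey : Real.exp t - Real.exp s ≤ (t - s) * Real.exp t := by
    have h3 := Real.add_one_le_exp (s - t)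
    nlinarith
  have habs : |t - s| * |Real.exp t - Real.exp s| = (t - s) * (Real.exp t - Real.exp s) := by
    rw [← abs_mul, abs_of_nonneg]
    rcases le_total s t with h | h
    · have := Real.exp_le_exp.mpr h
      nlinarith
    · have := Real.exp_le_exp.mpr h
      nlinarith
  rw [habs, abs_of_nonneg (by linarith)]
  nlinarith
end
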